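/- Let A and C be 3×3 non-negative integer matrices and let M = [[A, A−I],[C−I, C]] be the 6×6 block matrix, where A−I and C−I are assumed non-negative and every row of A−I and of C−I has at least one strictly positive entry, and suppose A + C − I has all entries strictly positive. Then M² has all entries strictly positive, i.e., M is a primitive matrix. -/

import Mathlib

/-!
Each block of `M²` has the form `(X - 1) * (A + C - 1) + Y` with `X ∈ {A, C}` and `Y ≥ 0`.
Since `A + C - 1` is positive and every row of `X - 1` is non-negative with a positive entry,
the product is already positive.
-/

open Matrix

lemma Matrix.mul_apply_pos_of_exists_pos {m n o R : Type*} [Fintype n]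
    [Semiring R] [PartialOrder R] [IsStrictOrderedRing R]
    {B : Matrix m n R} {P : Matrix n o R} (hB : ∀ i k, 0 ≤ B i k) (hP : ∀ k j, 0 < P k j)
    {i : m} (hrow : ∃ k, 0 < B i k) (j : o) : 0 < (B * P) i j := by
  obtain ⟨k, hk⟩ := hrow
  rw [mul_apply]
  exact Finset.sum_pos' (fun l _ => mul_nonneg (hB i l) (hP l j).le)
    ⟨k, Finset.mem_univ k, mul_pos hk (hP k j)⟩

lemma Matrix.fromBlocks_sub_one_sq {n R : Type*} [Fintype n] [DecidableEq n] [Ring R]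
    (A C : Matrix n n R) :
    fromBlocks A (A - 1) (C - 1) C * fromBlocks A (A - 1) (C - 1) C =
      fromBlocks ((A - 1) * (A + C - 1) + A) ((A - 1) * (A + C - 1) + (A - 1))
        ((C - 1) * (A + C - 1) + (C - 1)) ((C - 1) * (A + C - 1) + C) := by
  rw [fromBlocks_multiply]
  congr 1 <;> noncomm_ring

/-- If `A, C` are 3×3 non-negative integer matrices with `A - I` and `C - I`
non-negative, every row of `A - I` and of `C - I` containing a strictly positive entry,
and `A + C - I` has all entries strictly positive, then the square of the block matrix
`M = [[A, A-I], [C-I, C]]` has all entries strictly positive, i.e. `M` is primitive. -/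
theorem stmt12 (A C : Matrix (Fin 3) (Fin 3) ℤ)
    (hA : ∀ i j, 0 ≤ A i j) (hC : ∀ i j, 0 ≤ C i j)
    (hA1 : ∀ i j, 0 ≤ (A - 1) i j) (hC1 : ∀ i j, 0 ≤ (C - 1) i j)
    (hArow : ∀ i, ∃ j, 0 < (A - 1) i j) (hCrow : ∀ i, ∃ j, 0 < (C - 1) i j)
    (hACpos : ∀ i j, 0 < (A + C - 1) i j) :
    ∀ i j, 0 < (Matrix.fromBlocks A (A - 1) (C - 1) C *
                Matrix.fromBlocks A (A - 1) (C - 1) C) i j := by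
  have hApos i j : 0 < ((A - 1) * (A + C - 1)) i j :=
    mul_apply_pos_of_exists_pos hA1 hACpos (hArow i) j
  have hCpos i j : 0 < ((C - 1) * (A + C - 1)) i j :=
    mul_apply_pos_of_exists_pos hC1 hACpos (hCrow i) j
  rw [fromBlocks_sub_one_sq]
  rintro (i | i) (j | j)
  · exact add_pos_of_pos_of_nonneg (hApos i j) (hA i j)
  · exact add_pos_of_pos_of_nonneg (hApos i j) (hA1 i j)
  · exact add_pos_of_pos_of_nonneg (hCpos i j) (hC1 i j)
  · exact add_pos_of_pos_of_nonneg (hCpos i j) (hC i j)
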